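/- arXiv:1512.01348 — 3 statements merged into one kernel-verified Lean document; each statement's English description precedes it below -/
import Mathlib

section
/- Let G be a finite simple graph with vertex set V and let S ⊆ V be nonempty with c(S) = {v ∈ V ∖ S : N(v) ⊆ S}. If the bipartite subgraph of G induced between c(S) and S has a matching saturating S, then H(G) = |S| + H(G − d(S)), where d(S) = c(S) ∪ S and G − d(S) is the subgraph of G induced on V ∖ d(S). -/
/-!
Write `W = (c(S) ∪ S)ᶜ` and let `M(G, q)` be the largest number of fixed points of a map
`[q]^V → [q]^V` whose interaction graph lies in `G`, so that `g(G, q) = log_q M(G, q)`. A fixed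
point `x` of such a map `f` is determined by its values on `S` and on `W`: on `c(S)` it equals
`f x`, which reads only `S`. Freezing the values on `S` leaves a map on `G[W]`, hence
`M(G, q) ≤ q^|S| M(G[W], q)`. Conversely, given a matching `s ↦ g s` of `S` into `c(S)`, let `s`
and `g s` copy each other, play a map on `G[W]` on `W` and `0` on the rest of `c(S)`: every
assignment on `S` extends every fixed point on `W`, so `M(G, q) ≥ q^|S| M(G[W], q)`. Taking
`log_q` and the supremum over `q` gives the result.
-/
noncomputable section

/-- `g : [q]^V → [q]` depends essentially on coordinate `u`: there exist two inputs that
differ only at coordinate `u` on which `g` takes different values. -/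
def DependsOnCoord {V : Type*} {q : ℕ} (g : (V → Fin q) → Fin q) (u : V) : Prop :=
  ∃ a b : V → Fin q, (∀ w, w ≠ u → a w = b w) ∧ g a ≠ g b

/-- The interaction graph of `f` is contained in the simple graph `G`
(viewed as the symmetric loopless digraph with arcs `(u,v)` and `(v,u)` for every edge `uv`). -/
def IGLe {V : Type*} {q : ℕ} (G : SimpleGraph V) (f : (V → Fin q) → (V → Fin q)) : Prop :=
  ∀ u v : V, DependsOnCoord (fun x => f x v) u → G.Adj u v

/-- The `q`-ary guessing number of a simple graph `G`: the maximum of `log_q |Fix(f)|`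
over all `f` whose interaction graph is contained in `G`. -/
def guessing {V : Type*} (G : SimpleGraph V) (q : ℕ) : ℝ :=
  sSup {x : ℝ | ∃ f : (V → Fin q) → (V → Fin q),
    IGLe G f ∧ x = Real.logb q (Set.ncard {p : V → Fin q | f p = p})}

/-- The entropy of a simple graph: the supremum over `q ≥ 2` of its `q`-guessing numbers. -/
def graphEntropy {V : Type*} (G : SimpleGraph V) : ℝ :=
  sSup {x : ℝ | ∃ q : ℕ, 2 ≤ q ∧ x = guessing G q}

/-- The set of all entropies of finite simple graphs. -/
def entropySet : Set ℝ := {x : ℝ | ∃ (n : ℕ) (G : SimpleGraph (Fin n)), graphEntropy G = x}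

/-- A finite simple graph is entropy-minimal if no simple graph with fewer vertices has the same
fractional part of the entropy. -/
def EntropyMinimal {n : ℕ} (G : SimpleGraph (Fin n)) : Prop :=
  ∀ m : ℕ, m < n → ∀ G' : SimpleGraph (Fin m),
    Int.fract (graphEntropy G') ≠ Int.fract (graphEntropy G)


/-- `c(S)`: the vertices outside `S` all of whose neighbours lie in `S`. -/
def cSet {V : Type*} (G : SimpleGraph V) (S : Set V) : Set V :=
  {v | v ∉ S ∧ ∀ w, G.Adj v w → w ∈ S}

/-- The bipartite subgraph of `G` induced between `C` and `S` has a matching saturating `S`: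
each vertex of `S` is matched to a distinct neighbour in `C`. -/
def HasSaturatingMatching {V : Type*} (G : SimpleGraph V) (C S : Set V) : Prop :=
  ∃ g : V → V, (∀ s ∈ S, g s ∈ C ∧ G.Adj (g s) s) ∧ Set.InjOn g S

open Function Set

section DependsOnCoord

variable {V : Type*} {q : ℕ} {F : (V → Fin q) → Fin q}

theorem DependsOnCoord.eq_of_forall_eq_apply {u w : V} (hF : ∀ x, F x = x u)
    (h : DependsOnCoord F w) : w = u := by
  obtain ⟨a, b, hab, hne⟩ := h
  by_contra hwu
  exact hne (by rw [hF, hF, hab u (Ne.symm hwu)])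

theorem not_dependsOnCoord_of_forall_eq {c : Fin q} {w : V} (hF : ∀ x, F x = c) :
    ¬ DependsOnCoord F w := by
  rintro ⟨a, b, -, hne⟩
  exact hne (by rw [hF, hF])

theorem DependsOnCoord.exists_of_forall_eq_comp_domRestrict {W : Set V}
    {H : (W → Fin q) → Fin q} {u : V} (hF : ∀ x, F x = H (W.domRestrict x))
    (h : DependsOnCoord F u) : ∃ hu : u ∈ W, DependsOnCoord H ⟨u, hu⟩ := by
  obtain ⟨a, b, hab, hne⟩ := h
  rw [hF, hF] at hne
  by_cases hu : u ∈ W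
  · refine ⟨hu, W.domRestrict a, W.domRestrict b, fun w hw => hab w ?_, hne⟩
    exact fun h => hw (Subtype.ext h)
  · exact absurd (congrArg H (funext fun w => hab w (ne_of_mem_of_not_mem w.2 hu))) hne

theorem dependsOn_of_forall_dependsOnCoord_mem [Finite V] {T : Set V}
    (h : ∀ u, DependsOnCoord F u → u ∈ T) : DependsOn F T := by
  classical
  have := Fintype.ofFinite V
  intro a b hab
  suffices key : ∀ s : Finset V, ∀ a : V → Fin q, (∀ w ∉ s, a w = b w) →
      (∀ w ∈ T, a w = b w) → F a = F b from
    key Finset.univ a (fun w hw => absurd (Finset.mem_univ w) hw) hab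
  intro s
  induction s using Finset.induction_on with
  | empty => exact fun a ha _ => congrArg F (funext fun w => ha w (Finset.notMem_empty w))
  | insert u s _ ih =>
    intro a ha hT
    have hstep : F a = F (update a u (b u)) := by
      by_cases hu : u ∈ T
      · rw [← hT u hu, update_eq_self]
      · by_contra hne
        exact hu (h u ⟨a, _, fun w hw => (update_of_ne hw _ _).symm, hne⟩)
    rw [hstep]
    refine ih _ (fun w hw => ?_) (fun w hw => ?_) <;> rcases eq_or_ne w u with rfl | hwu
    · exact update_self ..
    · rw [update_of_ne hwu]; exact ha w (by simp [hw, hwu])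
    · exact update_self ..
    · rw [update_of_ne hwu]; exact hT w hw

end DependsOnCoord

section Restriction

variable {V α : Type*}

def restrictWith (f : (V → α) → V → α) (W : Set V) (x : V → α) : (W → α) → W → α :=
  fun y => W.domRestrict (f (extend Subtype.val y x))

theorem restrictWith_congr (f : (V → α) → V → α) {W : Set V} {x x' : V → α}
    (h : ∀ v ∉ W, x v = x' v) : restrictWith f W x = restrictWith f W x' := by
  have hext : ∀ y : W → α, extend Subtype.val y x = extend Subtype.val y x' := by
    intro y
    funext v
    by_cases hv : ∃ w : W, ↑w = v
    · obtain ⟨w, rfl⟩ := hv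
      simp only [Subtype.val_injective.extend_apply]
    · rw [extend_apply' _ _ _ hv, extend_apply' _ _ _ hv]
      exact h v fun hvW => hv ⟨⟨v, hvW⟩, rfl⟩
  funext y
  simp only [restrictWith, hext]

theorem isFixedPt_restrictWith_domRestrict {f : (V → α) → V → α} {x : V → α}
    (hx : IsFixedPt f x) (W : Set V) : IsFixedPt (restrictWith f W x) (W.domRestrict x) := by
  have hext : extend Subtype.val (W.domRestrict x) x = x := by
    funext v
    by_cases hv : ∃ w : W, ↑w = v
    · obtain ⟨w, rfl⟩ := hv
      exact Subtype.val_injective.extend_apply _ _ w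
    · exact extend_apply' _ _ _ hv
  simp only [IsFixedPt, restrictWith, hext, hx.eq]

variable {q : ℕ} {G : SimpleGraph V} {f : (V → Fin q) → V → Fin q}

theorem IGLe.restrictWith (hf : IGLe G f) (W : Set V) (x : V → Fin q) :
    IGLe (G.induce W) (restrictWith f W x) := by
  rintro u v ⟨y₁, y₂, hy, hne⟩
  refine hf u v ⟨extend Subtype.val y₁ x, extend Subtype.val y₂ x, fun w hw => ?_, hne⟩
  by_cases hwW : ∃ w' : W, ↑w' = w
  · obtain ⟨w', rfl⟩ := hwW
    simp only [Subtype.val_injective.extend_apply]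
    exact hy w' fun h => hw (congrArg Subtype.val h)
  · rw [extend_apply' _ _ _ hwW, extend_apply' _ _ _ hwW]

theorem IGLe.eqOn_cSet [Finite V] {S : Set V} (hf : IGLe G f) {x y : V → Fin q}
    (hx : IsFixedPt f x) (hy : IsFixedPt f y) (h : EqOn x y S) : EqOn x y (cSet G S) := by
  intro v hv
  have hdep : DependsOn (fun x => f x v) S :=
    dependsOn_of_forall_dependsOnCoord_mem fun u hu => hv.2 u (hf u v hu).symm
  rw [← hx.eq, ← hy.eq]
  exact hdep h

end Restriction

theorem Set.ncard_le_mul_natCard_of_ncard_fiber_le {α β : Type*} [Finite α] [Finite β]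
    (s : Set α) (φ : α → β) {n : ℕ} (h : ∀ b, {a ∈ s | φ a = b}.ncard ≤ n) :
    s.ncard ≤ n * Nat.card β := by
  classical
  have := Fintype.ofFinite α
  have := Fintype.ofFinite β
  calc s.ncard = s.toFinset.card := ncard_eq_toFinset_card' s
    _ ≤ n * (s.toFinset.image φ).card := Finset.card_le_mul_card_image _ _ fun b _ => by
        simpa [← ncard_coe_finset] using h b
    _ ≤ n * Nat.card β := by
        rw [Nat.card_eq_fintype_card]
        exact Nat.mul_le_mul_left _ (Finset.card_le_univ _)

section MaxFix

variable {V : Type*} {q : ℕ} {G : SimpleGraph V} {f : (V → Fin q) → V → Fin q}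

def fixedPointCounts (G : SimpleGraph V) (q : ℕ) : Set ℕ :=
  {N | ∃ f : (V → Fin q) → V → Fin q, IGLe G f ∧ N = (fixedPoints f).ncard}

def maxFix (G : SimpleGraph V) (q : ℕ) : ℕ :=
  sSup (fixedPointCounts G q)

theorem IGLe.const (G : SimpleGraph V) (c : V → Fin q) : IGLe G fun _ => c :=
  fun _ _ h => absurd h (not_dependsOnCoord_of_forall_eq fun _ => rfl)

theorem bddAbove_fixedPointCounts [Finite V] (G : SimpleGraph V) (q : ℕ) :
    BddAbove (fixedPointCounts G q) :=
  ⟨q ^ Nat.card V, by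
    rintro _ ⟨f, -, rfl⟩
    simpa [Nat.card_fun] using ncard_le_card (fixedPoints f)⟩

theorem maxFix_le {N : ℕ}
    (h : ∀ f : (V → Fin q) → V → Fin q, IGLe G f → (fixedPoints f).ncard ≤ N) :
    maxFix G q ≤ N :=
  csSup_le' <| by rintro _ ⟨f, hf, rfl⟩; exact h f hf

theorem IGLe.ncard_fixedPoints_le_maxFix [Finite V] (hf : IGLe G f) :
    (fixedPoints f).ncard ≤ maxFix G q :=
  le_csSup (bddAbove_fixedPointCounts G q) ⟨f, hf, rfl⟩

theorem exists_ncard_fixedPoints_eq_maxFix [Finite V] [NeZero q] (G : SimpleGraph V) :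
    ∃ f : (V → Fin q) → V → Fin q, IGLe G f ∧ (fixedPoints f).ncard = maxFix G q := by
  obtain ⟨f, hf, hN⟩ :=
    Nat.sSup_mem (s := fixedPointCounts G q) ⟨_, _, IGLe.const G 0, rfl⟩
      (bddAbove_fixedPointCounts G q)
  exact ⟨f, hf, hN.symm⟩

theorem maxFix_le_pow_card [Finite V] (G : SimpleGraph V) (q : ℕ) :
    maxFix G q ≤ q ^ Nat.card V :=
  maxFix_le fun f _ => by simpa [Nat.card_fun] using ncard_le_card (fixedPoints f)

theorem one_le_maxFix [Finite V] [NeZero q] (G : SimpleGraph V) : 1 ≤ maxFix G q := by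
  have hconst : (fixedPoints fun _ : V → Fin q => (0 : V → Fin q)).ncard = 1 := by
    rw [← ncard_singleton (0 : V → Fin q)]
    congr 1
    ext x
    exact eq_comm
  exact hconst ▸ (IGLe.const G 0).ncard_fixedPoints_le_maxFix

end MaxFix

section UpperBound

variable {V : Type*} [Finite V] {q : ℕ} {G : SimpleGraph V} {f : (V → Fin q) → V → Fin q}
  {C S : Set V}

/-- Fixed points with the same values on `S` agree outside `W = (C ∪ S)ᶜ`, so restriction to `W`
embeds them into the fixed points of a single map on `G[W]`. -/
theorem IGLe.ncard_fixedPoints_fiber_le_maxFix (hf : IGLe G f) (hC : C ⊆ cSet G S)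
    (a : S → Fin q) :
    {x ∈ fixedPoints f | S.domRestrict x = a}.ncard ≤ maxFix (G.induce (C ∪ S)ᶜ) q := by
  set fiber := {x ∈ fixedPoints f | S.domRestrict x = a}
  have hagree : ∀ x ∈ fiber, ∀ x' ∈ fiber, ∀ v ∉ (C ∪ S)ᶜ, x v = x' v := by
    rintro x ⟨hx, rfl⟩ x' ⟨hx', hxx'⟩ v hv
    have hS : EqOn x x' S := fun s hs => (congrFun hxx' ⟨s, hs⟩).symm
    rcases notMem_compl_iff.mp hv with hvC | hvS
    · exact hf.eqOn_cSet hx hx' hS (hC hvC)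
    · exact hS hvS
  rcases fiber.eq_empty_or_nonempty with hempty | ⟨x₀, hx₀⟩
  · simp [fiber, hempty]
  refine le_trans (ncard_le_ncard_of_injOn (s := fiber)
    (t := fixedPoints (_root_.restrictWith f (C ∪ S)ᶜ x₀)) (C ∪ S)ᶜ.domRestrict ?_ ?_)
    (hf.restrictWith _ x₀).ncard_fixedPoints_le_maxFix
  · rintro x hx
    rw [restrictWith_congr f (hagree x₀ hx₀ x hx)]
    exact isFixedPt_restrictWith_domRestrict hx.1 _
  · intro x hx x' hx' hxx'
    funext v
    by_cases hv : v ∈ (C ∪ S)ᶜ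
    · exact congrFun hxx' ⟨v, hv⟩
    · exact hagree x hx x' hx' v hv

theorem maxFix_le_pow_mul (hC : C ⊆ cSet G S) :
    maxFix G q ≤ q ^ S.ncard * maxFix (G.induce (C ∪ S)ᶜ) q :=
  maxFix_le fun f hf => by
    have hcard : q ^ S.ncard = Nat.card (S → Fin q) := by
      rw [Nat.card_fun, Nat.card_fin, Nat.card_coe_set_eq]
    rw [hcard, mul_comm]
    exact ncard_le_mul_natCard_of_ncard_fiber_le _ S.domRestrict
      (hf.ncard_fixedPoints_fiber_le_maxFix hC)

end UpperBound

section LowerBound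

variable {V : Type*} {q : ℕ} [NeZero q] {G : SimpleGraph V} {g : V → V} {S W : Set V}
  {f' : (W → Fin q) → W → Fin q}

open Classical in
/-- `extend (S.domRestrict g) (S.domRestrict x) 0` lets the partner `g s` copy `x s` and is `0`
off `g '' S`. -/
def matchingExtension (g : V → V) (S W : Set V) (f' : (W → Fin q) → W → Fin q) :
    (V → Fin q) → V → Fin q :=
  fun x v => if hv : v ∈ W then f' (W.domRestrict x) ⟨v, hv⟩
    else if v ∈ S then x (g v) else extend (S.domRestrict g) (S.domRestrict x) 0 v

theorem IGLe.matchingExtension (hadj : ∀ s ∈ S, G.Adj (g s) s) (hinj : InjOn g S)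
    (hf' : IGLe (G.induce W) f') : IGLe G (matchingExtension g S W f') := by
  intro u v hdep
  by_cases hvW : v ∈ W
  · obtain ⟨hu, hdep'⟩ := hdep.exists_of_forall_eq_comp_domRestrict
      (H := fun y => f' y ⟨v, hvW⟩) fun x => dif_pos hvW
    exact hf' ⟨u, hu⟩ ⟨v, hvW⟩ hdep'
  by_cases hvS : v ∈ S
  · rw [hdep.eq_of_forall_eq_apply (u := g v) fun x => by
      simp [_root_.matchingExtension, hvW, hvS]]
    exact hadj v hvS
  by_cases hvg : ∃ s : S, S.domRestrict g s = v
  · obtain ⟨s, rfl⟩ := hvg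
    rw [hdep.eq_of_forall_eq_apply fun x => by
      simp only [_root_.matchingExtension, dif_neg hvW, if_neg hvS, hinj.injective.extend_apply]
      rfl]
    exact (hadj s s.2).symm
  · exact absurd hdep (not_dependsOnCoord_of_forall_eq (c := 0) fun x => by
      simp only [_root_.matchingExtension, dif_neg hvW, if_neg hvS, extend_apply' _ _ _ hvg,
        Pi.zero_apply])

open Classical in
def matchingFixedPoint (g : V → V) (S W : Set V) (a : S → Fin q) (y : W → Fin q) : V → Fin q :=
  fun v => if v ∈ W then extend Subtype.val y 0 v
    else if v ∈ S then extend Subtype.val a 0 v else extend (S.domRestrict g) a 0 v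

theorem domRestrict_matchingFixedPoint_right (a : S → Fin q) (y : W → Fin q) :
    W.domRestrict (matchingFixedPoint g S W a y) = y := by
  funext w
  simp [matchingFixedPoint]

theorem domRestrict_matchingFixedPoint_left (hWS : Disjoint W S) (a : S → Fin q)
    (y : W → Fin q) : S.domRestrict (matchingFixedPoint g S W a y) = a := by
  funext s
  simp [matchingFixedPoint, disjoint_right.mp hWS s.2]

theorem isFixedPt_matchingFixedPoint (hinj : InjOn g S) (hg : MapsTo g S (W ∪ S)ᶜ)
    (hWS : Disjoint W S) (a : S → Fin q) {y : W → Fin q} (hy : IsFixedPt f' y) :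
    IsFixedPt (matchingExtension g S W f') (matchingFixedPoint g S W a y) := by
  funext v
  by_cases hvW : v ∈ W
  · simp only [matchingExtension, dif_pos hvW, domRestrict_matchingFixedPoint_right, hy.eq]
    simp only [matchingFixedPoint, if_pos hvW]
    exact (Subtype.val_injective.extend_apply y 0 ⟨v, hvW⟩).symm
  by_cases hvS : v ∈ S
  · have hgv : g v ∉ W ∧ g v ∉ S := by simpa using hg hvS
    simp only [matchingExtension, matchingFixedPoint, dif_neg hvW, if_neg hgv.1, if_neg hgv.2,
      if_neg hvW, if_pos hvS]
    rw [Subtype.val_injective.extend_apply _ _ ⟨v, hvS⟩]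
    exact hinj.injective.extend_apply a 0 ⟨v, hvS⟩
  · simp only [matchingExtension, dif_neg hvW, if_neg hvS,
      domRestrict_matchingFixedPoint_left hWS]
    simp [matchingFixedPoint, hvW, hvS]

theorem pow_mul_ncard_fixedPoints_le [Finite V] (hinj : InjOn g S) (hg : MapsTo g S (W ∪ S)ᶜ)
    (hWS : Disjoint W S) (f' : (W → Fin q) → W → Fin q) :
    q ^ S.ncard * (fixedPoints f').ncard ≤ (fixedPoints (matchingExtension g S W f')).ncard :=
  calc q ^ S.ncard * (fixedPoints f').ncard
      = ((univ : Set (S → Fin q)) ×ˢ fixedPoints f').ncard := by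
        rw [ncard_prod, ncard_univ, Nat.card_fun, Nat.card_fin, Nat.card_coe_set_eq]
    _ ≤ (fixedPoints (matchingExtension g S W f')).ncard :=
      ncard_le_ncard_of_injOn (uncurry (matchingFixedPoint g S W))
        (fun p hp => isFixedPt_matchingFixedPoint hinj hg hWS p.1 hp.2)
        fun ⟨a, y⟩ _ ⟨a', y'⟩ _ h => by
          have hS := congrArg S.domRestrict h
          have hW := congrArg W.domRestrict h
          simp only [uncurry_apply_pair, domRestrict_matchingFixedPoint_left hWS,
            domRestrict_matchingFixedPoint_right] at hS hW
          rw [hS, hW]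

theorem pow_mul_maxFix_le [Finite V] {C : Set V} (hm : HasSaturatingMatching G C S)
    (hCS : Disjoint C S) : q ^ S.ncard * maxFix (G.induce (C ∪ S)ᶜ) q ≤ maxFix G q := by
  obtain ⟨g, hg, hinj⟩ := hm
  obtain ⟨f', hf', hmax⟩ := exists_ncard_fixedPoints_eq_maxFix (q := q) (G.induce (C ∪ S)ᶜ)
  have hgC : MapsTo g S ((C ∪ S)ᶜ ∪ S)ᶜ := fun s hs => by
    simp [(hg s hs).1, disjoint_left.mp hCS (hg s hs).1]
  have hWS : Disjoint (C ∪ S)ᶜ S := disjoint_compl_left_iff_subset.mpr subset_union_right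
  rw [← hmax]
  exact (pow_mul_ncard_fixedPoints_le hinj hgC hWS f').trans
    (IGLe.matchingExtension (fun s hs => (hg s hs).2) hinj hf').ncard_fixedPoints_le_maxFix

theorem maxFix_eq_pow_mul_maxFix_induce [Finite V] (hm : HasSaturatingMatching G (cSet G S) S) :
    maxFix G q = q ^ S.ncard * maxFix (G.induce (cSet G S ∪ S)ᶜ) q :=
  le_antisymm (maxFix_le_pow_mul subset_rfl)
    (pow_mul_maxFix_le hm (disjoint_left.mpr fun _ hv => hv.1))

end LowerBound

theorem Real.logb_natCast_le_logb_natCast {b : ℝ} (hb : 1 < b) {m n : ℕ} (h : m ≤ n)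
    (hn : 1 ≤ n) : Real.logb b m ≤ Real.logb b n := by
  rcases m.eq_zero_or_pos with rfl | hm
  · simpa using Real.logb_nonneg hb (by exact_mod_cast hn)
  · exact Real.logb_le_logb_of_le hb (by exact_mod_cast hm) (by exact_mod_cast h)

section Entropy

variable {V : Type*} [Finite V] {q : ℕ}

theorem guessing_eq_logb_maxFix (G : SimpleGraph V) (hq : 1 < q) :
    guessing G q = Real.logb q (maxFix G q) := by
  have : NeZero q := ⟨by omega⟩
  have hq' : (1 : ℝ) < q := by exact_mod_cast hq
  refine IsGreatest.csSup_eq ⟨?_, ?_⟩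
  · obtain ⟨f, hf, hmax⟩ := exists_ncard_fixedPoints_eq_maxFix (q := q) G
    exact ⟨f, hf, by rw [← hmax]; rfl⟩
  · rintro _ ⟨f, hf, rfl⟩
    exact Real.logb_natCast_le_logb_natCast hq' (IGLe.ncard_fixedPoints_le_maxFix (f := f) hf)
      (one_le_maxFix G)

theorem guessing_le_card (G : SimpleGraph V) (hq : 1 < q) : guessing G q ≤ Nat.card V := by
  have hq' : (1 : ℝ) < q := by exact_mod_cast hq
  calc guessing G q ≤ Real.logb q ((q ^ Nat.card V : ℕ) : ℝ) := by
        rw [guessing_eq_logb_maxFix G hq]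
        exact Real.logb_natCast_le_logb_natCast hq' (maxFix_le_pow_card G q)
          (Nat.one_le_pow _ _ (by omega))
    _ = Nat.card V := by
        rw [Nat.cast_pow, Real.logb_pow, Real.logb_self_eq_one hq', mul_one]

theorem guessing_eq_ncard_add_guessing_induce {G : SimpleGraph V} {S : Set V}
    (hm : HasSaturatingMatching G (cSet G S) S) (hq : 1 < q) :
    guessing G q = S.ncard + guessing (G.induce (cSet G S ∪ S)ᶜ) q := by
  have : NeZero q := ⟨by omega⟩
  have hq' : (1 : ℝ) < q := by exact_mod_cast hq
  have hpos : (0 : ℝ) < maxFix (G.induce (cSet G S ∪ S)ᶜ) q := by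
    exact_mod_cast one_le_maxFix _
  rw [guessing_eq_logb_maxFix G hq, guessing_eq_logb_maxFix _ hq,
    maxFix_eq_pow_mul_maxFix_induce hm, Nat.cast_mul, Nat.cast_pow,
    Real.logb_mul (by positivity) hpos.ne', Real.logb_pow, Real.logb_self_eq_one hq', mul_one]

theorem graphEntropy_eq_add_of_guessing_eq_add {U : Type*} {G : SimpleGraph U}
    {G' : SimpleGraph V} {c : ℝ} (h : ∀ q, 2 ≤ q → guessing G q = c + guessing G' q) :
    graphEntropy G = c + graphEntropy G' := by
  set E' := {x | ∃ q, 2 ≤ q ∧ x = guessing G' q}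
  have hset : {x | ∃ q, 2 ≤ q ∧ x = guessing G q} = OrderIso.addLeft c '' E' := by
    ext x
    simp only [E', mem_image, OrderIso.addLeft_apply]
    constructor
    · rintro ⟨q, hq, rfl⟩
      exact ⟨_, ⟨q, hq, rfl⟩, (h q hq).symm⟩
    · rintro ⟨_, ⟨q, hq, rfl⟩, rfl⟩
      exact ⟨q, hq, (h q hq).symm⟩
  have hne : E'.Nonempty := ⟨_, 2, le_rfl, rfl⟩
  have hbdd : BddAbove E' := ⟨Nat.card V, by rintro _ ⟨q, hq, rfl⟩; exact guessing_le_card G' hq⟩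
  rw [graphEntropy, graphEntropy, hset, ← OrderIso.map_csSup' _ hne hbdd]
  rfl

end Entropy

theorem entropy_eq_card_add_entropy_deleted_general {n : ℕ} (G : SimpleGraph (Fin n))
    (S : Set (Fin n))
    (hmatch : HasSaturatingMatching G (cSet G S) S) :
    graphEntropy G =
      (S.ncard : ℝ) + graphEntropy (G.induce ((cSet G S ∪ S)ᶜ : Set (Fin n))) :=
  graphEntropy_eq_add_of_guessing_eq_add fun _ hq => guessing_eq_ncard_add_guessing_induce hmatch hq

/-- If the bipartite subgraph of `G` between `c(S)` and `S` has a matching saturating the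
nonempty set `S`, then `H(G) = |S| + H(G - d(S))` where `d(S) = c(S) ∪ S`. -/
theorem entropy_eq_card_add_entropy_deleted {n : ℕ} (G : SimpleGraph (Fin n))
    (S : Set (Fin n)) (hS : S.Nonempty)
    (hmatch : HasSaturatingMatching G (cSet G S) S) :
    graphEntropy G =
      (S.ncard : ℝ) + graphEntropy (G.induce ((cSet G S ∪ S)ᶜ : Set (Fin n))) :=
  entropy_eq_card_add_entropy_deleted_general G S hmatch

end
end

section
/- There is no finite simple graph G with 1 < H(G) < 2. -/
noncomputable section

/-! If `G` contains two disjoint edges or a triangle, then over the alphabet `Fin q` every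
vertex of such a clique can guess that the values on the clique sum to zero; this has `q ^ 2`
fixed points, so `H(G) ≥ 2`. Otherwise `G` has a vertex cover `C` with at most one vertex, and a
fixed point is determined by its values on `C`, so `H(G) ≤ 1`. -/

open Function

variable {V : Type*} {q : ℕ} {G : SimpleGraph V}

theorem igLe_of_apply_eq {f : (V → Fin q) → V → Fin q}
    (h : ∀ v x y, (∀ u, G.Adj u v → x u = y u) → f x v = f y v) : IGLe G f := by
  rintro u v ⟨x, y, hxy, hne⟩
  by_contra huv
  exact hne (h v x y fun w hw => hxy w fun hwu => huv (hwu ▸ hw))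

theorem apply_eq_of_forall_dependsOnCoord [Finite V] {g : (V → Fin q) → Fin q}
    {x y : V → Fin q} (h : ∀ u, DependsOnCoord g u → x u = y u) : g x = g y := by
  classical
  have := Fintype.ofFinite V
  suffices key : ∀ T : Finset V, ∀ x, (∀ u ∉ T, x u = y u) →
      (∀ u, DependsOnCoord g u → x u = y u) → g x = g y from
    key Finset.univ x (by simp) h
  intro T
  induction T using Finset.induction_on with
  | empty => exact fun x hx _ => congrArg g (funext fun u => hx u (Finset.notMem_empty u))
  | insert u T _ ih =>
    intro x hx hdep
    have hstep : g x = g (update x u (y u)) := by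
      by_cases hu : DependsOnCoord g u
      · rw [update_eq_self_iff.2 (hdep u hu).symm]
      · by_contra hne
        exact hu ⟨x, _, fun w hw => (update_of_ne hw _ _).symm, hne⟩
    rw [hstep]
    refine ih _ (fun w hw => ?_) (fun w hw => ?_) <;>
      rcases eq_or_ne w u with rfl | hwu
    · exact update_self ..
    · rw [update_of_ne hwu]; exact hx w (by simp [hw, hwu])
    · exact update_self ..
    · rw [update_of_ne hwu]; exact hdep w hw

theorem IGLe.apply_eq [Finite V] {f : (V → Fin q) → V → Fin q} (hf : IGLe G f)
    {x y : V → Fin q} {v : V} (h : ∀ u, G.Adj u v → x u = y u) : f x v = f y v :=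
  apply_eq_of_forall_dependsOnCoord fun u hu => h u (hf u v hu)

/-- A fixed point is determined by its restriction to a vertex cover `C`: every vertex outside
`C` only sees vertices of `C`. -/
theorem ncard_fixedPoints_le_of_isVertexCover [Finite V] {C : Set V} (hC : G.IsVertexCover C)
    {f : (V → Fin q) → V → Fin q} (hf : IGLe G f) :
    {p : V → Fin q | f p = p}.ncard ≤ q ^ C.ncard := by
  have hinj : Set.InjOn (fun p (c : C) => p c) {p : V → Fin q | f p = p} := by
    intro p hp p' hp' hpp'
    funext v
    by_cases hv : v ∈ C
    · exact congrFun hpp' ⟨v, hv⟩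
    · rw [← show f p = p from hp, ← show f p' = p' from hp']
      refine hf.apply_eq fun u huv => ?_
      exact congrFun hpp' ⟨u, (hC huv).resolve_right hv⟩
  calc {p : V → Fin q | f p = p}.ncard
      ≤ (Set.univ : Set (C → Fin q)).ncard :=
        Set.ncard_le_ncard_of_injOn _ (fun _ _ => Set.mem_univ _) hinj
    _ = q ^ C.ncard := by simp [Nat.card_fun]

theorem Real.logb_natCast_le_of_le_pow {b m k : ℕ} (hb : 1 < b) (h : m ≤ b ^ k) :
    Real.logb b m ≤ k := by
  rcases m.eq_zero_or_pos with rfl | hm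
  · simp
  have hb' : (1 : ℝ) < b := by exact_mod_cast hb
  calc Real.logb b m ≤ Real.logb b ((b : ℝ) ^ k) :=
        Real.logb_le_logb_of_le hb' (by exact_mod_cast hm) (by exact_mod_cast h)
    _ = k := by rw [Real.logb_pow, Real.logb_self_eq_one hb', mul_one]

theorem logb_ncard_fixedPoints_le [Finite V] (hq : 2 ≤ q) {C : Set V} (hC : G.IsVertexCover C)
    {f : (V → Fin q) → V → Fin q} (hf : IGLe G f) :
    Real.logb q {p : V → Fin q | f p = p}.ncard ≤ C.ncard :=
  Real.logb_natCast_le_of_le_pow hq (ncard_fixedPoints_le_of_isVertexCover hC hf)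

theorem guessing_le_of_isVertexCover [Finite V] (hq : 2 ≤ q) {C : Set V}
    (hC : G.IsVertexCover C) : guessing G q ≤ C.ncard := by
  have hconst : IGLe G fun (_ : V → Fin q) _ => (⟨0, by omega⟩ : Fin q) :=
    igLe_of_apply_eq fun _ _ _ _ => rfl
  refine csSup_le ⟨_, _, hconst, rfl⟩ ?_
  rintro _ ⟨f, hf, rfl⟩
  exact logb_ncard_fixedPoints_le hq hC hf

theorem logb_ncard_fixedPoints_le_guessing [Finite V] (hq : 2 ≤ q)
    {f : (V → Fin q) → V → Fin q} (hf : IGLe G f) :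
    Real.logb q {p : V → Fin q | f p = p}.ncard ≤ guessing G q := by
  refine le_csSup ⟨Nat.card V, ?_⟩ ⟨f, hf, rfl⟩
  rintro _ ⟨f', hf', rfl⟩
  simpa using logb_ncard_fixedPoints_le hq G.isVertexCover_univ hf'

theorem guessing_le_graphEntropy [Finite V] (hq : 2 ≤ q) : guessing G q ≤ graphEntropy G := by
  refine le_csSup ⟨Nat.card V, ?_⟩ ⟨q, hq, rfl⟩
  rintro _ ⟨q', hq', rfl⟩
  simpa using guessing_le_of_isVertexCover hq' G.isVertexCover_univ

theorem graphEntropy_le_of_isVertexCover [Finite V] {C : Set V} (hC : G.IsVertexCover C) :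
    graphEntropy G ≤ C.ncard := by
  refine csSup_le ⟨_, 2, le_rfl, rfl⟩ ?_
  rintro _ ⟨q, hq, rfl⟩
  exact guessing_le_of_isVertexCover hq hC

theorem le_guessing_of_injective [Finite V] (hq : 2 ≤ q) {f : (V → Fin q) → V → Fin q}
    (hf : IGLe G f) {k : ℕ} (φ : (Fin k → Fin q) → V → Fin q) (hφ : Injective φ)
    (hfix : ∀ c, f (φ c) = φ c) : (k : ℝ) ≤ guessing G q := by
  have hq' : (1 : ℝ) < q := by exact_mod_cast hq
  have hcard : q ^ k ≤ {p : V → Fin q | f p = p}.ncard := by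
    calc q ^ k = (Set.range φ).ncard := by simp [Set.ncard_range_of_injective hφ]
      _ ≤ _ := Set.ncard_le_ncard (by rintro _ ⟨c, rfl⟩; exact hfix c)
  calc (k : ℝ) = Real.logb q ((q : ℝ) ^ k) := by
        rw [Real.logb_pow, Real.logb_self_eq_one hq', mul_one]
    _ ≤ Real.logb q {p : V → Fin q | f p = p}.ncard :=
        Real.logb_le_logb_of_le hq' (by positivity) (by exact_mod_cast hcard)
    _ ≤ guessing G q := logb_ncard_fixedPoints_le_guessing hq hf

section cliqueMap

variable [NeZero q] [DecidableEq V]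

/-- Every vertex `t` guesses that the values on the clique `K t` sum to zero. -/
def cliqueMap (K : V → Finset V) (x : V → Fin q) (t : V) : Fin q :=
  -∑ s ∈ (K t).erase t, x s

theorem igLe_cliqueMap {K : V → Finset V} (hK : ∀ t, t ∈ K t ∧ G.IsClique (K t : Set V)) :
    IGLe G (cliqueMap (q := q) K) := by
  refine igLe_of_apply_eq fun t x y hxy => ?_
  refine congrArg Neg.neg (Finset.sum_congr rfl fun s hs => hxy s ?_)
  obtain ⟨hst, hs⟩ := Finset.mem_erase.1 hs
  exact (hK t).2 hs (hK t).1 hst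

theorem cliqueMap_eq_self_iff {K : V → Finset V} (hK : ∀ t, t ∈ K t) {x : V → Fin q} :
    cliqueMap K x = x ↔ ∀ t, ∑ s ∈ K t, x s = 0 := by
  simp only [funext_iff, cliqueMap, ← Finset.add_sum_erase _ _ (hK _), neg_eq_iff_add_eq_zero,
    add_comm]

/-- The values of `φ` are fixed points of the `cliqueMap` guessing zero sums on `A` and on `B`. -/
theorem le_guessing_of_isClique [Finite V] (hq : 2 ≤ q) {A B : Finset V}
    (hA : G.IsClique (A : Set V)) (hB : G.IsClique (B : Set V)) {k : ℕ}
    (φ : (Fin k → Fin q) → V → Fin q) (hφ : Injective φ)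
    (hφA : ∀ c, ∑ s ∈ A, φ c s = 0) (hφB : ∀ c, ∑ s ∈ B, φ c s = 0)
    (hφ₀ : ∀ c t, t ∉ A → t ∉ B → φ c t = 0) :
    (k : ℝ) ≤ guessing G q := by
  let K t := if t ∈ A then A else if t ∈ B then B else {t}
  have hK : ∀ t, t ∈ K t ∧ G.IsClique (K t : Set V) := by
    intro t
    by_cases htA : t ∈ A
    · simp [K, htA, hA]
    by_cases htB : t ∈ B <;> simp [K, htA, htB, hB]
  refine le_guessing_of_injective hq (igLe_cliqueMap hK) φ hφ fun c =>
    (cliqueMap_eq_self_iff fun t => (hK t).1).2 fun t => ?_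
  by_cases htA : t ∈ A
  · simpa [K, htA] using hφA c
  by_cases htB : t ∈ B
  · simpa [K, htA, htB] using hφB c
  · simpa [K, htA, htB] using hφ₀ c t htA htB

end cliqueMap

theorem two_le_guessing_of_triangle [Finite V] (hq : 2 ≤ q) {u v w : V}
    (huv : G.Adj u v) (huw : G.Adj u w) (hvw : G.Adj v w) : 2 ≤ guessing G q := by
  classical
  have : NeZero q := ⟨by omega⟩
  have hT : G.IsClique (({u, v, w} : Finset V) : Set V) := by
    simpa using (G.is3Clique_triple_iff.2 ⟨huv, huw, hvw⟩).isClique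
  have := huv.ne; have := huw.ne; have := hvw.ne
  have := huv.ne.symm; have := huw.ne.symm; have := hvw.ne.symm
  let φ : (Fin 2 → Fin q) → V → Fin q := fun c =>
    Pi.single u (c 0) + Pi.single v (c 1) - Pi.single w (c 0 + c 1)
  have hφ : Injective φ := by
    intro c c' h
    have h0 := congrFun h u
    have h1 := congrFun h v
    simp [φ, *] at h0 h1
    funext i
    fin_cases i <;> assumption
  exact_mod_cast le_guessing_of_isClique hq hT (B := ∅) (by simp) φ hφ
    (fun c => by simp [φ, *]) (fun c => by simp) (fun c t _ _ => by simp_all [φ])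

theorem two_le_guessing_of_disjoint_edges [Finite V] (hq : 2 ≤ q) {u v a b : V}
    (huv : G.Adj u v) (hab : G.Adj a b) (hua : u ≠ a) (hub : u ≠ b) (hva : v ≠ a)
    (hvb : v ≠ b) : 2 ≤ guessing G q := by
  classical
  have : NeZero q := ⟨by omega⟩
  have := huv.ne; have := hab.ne; have := huv.ne.symm; have := hab.ne.symm
  have := hua.symm; have := hub.symm; have := hva.symm; have := hvb.symm
  let φ : (Fin 2 → Fin q) → V → Fin q := fun c =>
    Pi.single u (c 0) - Pi.single v (c 0) + Pi.single a (c 1) - Pi.single b (c 1)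
  have hφ : Injective φ := by
    intro c c' h
    have h0 := congrFun h u
    have h1 := congrFun h a
    simp [φ, *] at h0 h1
    funext i
    fin_cases i <;> assumption
  have hA : G.IsClique (({u, v} : Finset V) : Set V) := by simpa using fun _ => huv
  have hB : G.IsClique (({a, b} : Finset V) : Set V) := by simpa using fun _ => hab
  exact_mod_cast le_guessing_of_isClique hq hA hB φ hφ (fun c => by simp [φ, *])
    (fun c => by simp [φ, *]) (fun c t _ _ => by simp_all [φ])

theorem exists_disjoint_edges_or_triangle_or_isVertexCover (G : SimpleGraph V) :
    (∃ u v a b, G.Adj u v ∧ G.Adj a b ∧ u ≠ a ∧ u ≠ b ∧ v ≠ a ∧ v ≠ b) ∨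
      (∃ u v w, G.Adj u v ∧ G.Adj u w ∧ G.Adj v w) ∨
      ∃ C : Set V, C.ncard ≤ 1 ∧ G.IsVertexCover C := by
  by_contra! ⟨hE, hT, hC⟩
  obtain ⟨x, y, hxy⟩ : ∃ x y, G.Adj x y := by
    by_contra! h
    exact hC ∅ (by simp) fun u v huv => (h u v huv).elim
  obtain ⟨u, v, huv, hux, hvx⟩ : ∃ u v, G.Adj u v ∧ u ≠ x ∧ v ≠ x := by
    by_contra! h
    exact hC {x} (by simp) fun u v huv => (em (u = x)).imp id (h u v huv)
  obtain ⟨z, hyz, hzx⟩ : ∃ z, G.Adj y z ∧ z ≠ x := by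
    by_cases hu : u = y
    · exact ⟨v, hu ▸ huv, hvx⟩
    · exact ⟨u, hE u v x y huv hxy hux hu hvx ▸ huv.symm, hux⟩
  refine hC {y} (by simp) fun s t hst => ?_
  by_contra! hsty
  obtain ⟨hsy, hty⟩ : s ≠ y ∧ t ≠ y := hsty
  have hx : s = x ∨ t = x := by
    by_contra! h
    exact hty (hE s t x y hst hxy h.1 hsy h.2)
  have hz : s = z ∨ t = z := by
    by_contra! h
    exact h.2 (hE s t y z hst hyz hsy h.1 hty)
  -- an edge `st` avoiding `y` meets both `xy` and `yz`, so it is `xz`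
  refine hT y x z hxy.symm hyz ?_
  rcases hx with rfl | rfl <;> rcases hz with rfl | rfl
  exacts [(hzx rfl).elim, hst, hst.symm, (hzx rfl).elim]

/-- There is no finite simple graph whose entropy lies strictly between 1 and 2. -/
theorem no_entropy_between_one_and_two :
    ¬ ∃ (n : ℕ) (G : SimpleGraph (Fin n)),
      1 < graphEntropy G ∧ graphEntropy G < 2 := by
  rintro ⟨n, G, hlow, hhigh⟩
  rcases exists_disjoint_edges_or_triangle_or_isVertexCover G with
      ⟨u, v, a, b, huv, hab, hua, hub, hva, hvb⟩ | ⟨u, v, w, huv, huw, hvw⟩ |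
      ⟨C, hC₁, hC⟩
  · have := two_le_guessing_of_disjoint_edges le_rfl huv hab hua hub hva hvb
    linarith [guessing_le_graphEntropy (G := G) le_rfl]
  · have := two_le_guessing_of_triangle le_rfl huv huw hvw
    linarith [guessing_le_graphEntropy (G := G) le_rfl]
  · have : (C.ncard : ℝ) ≤ 1 := by exact_mod_cast hC₁
    linarith [graphEntropy_le_of_isVertexCover hC]
end
end

section
/- The entropy of the graph G₁ on vertex set {1,…,7} with edge set {12, 23, 34, 45, 51, 67, 16, 26, 47} equals 11/3. -/
noncomputable section

/-- The graph `G₁` on vertices `{1,…,7}` (here `0,…,6 : Fin 7`) with edges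
`12, 23, 34, 45, 51, 67, 16, 26, 47`. -/
def G1 : SimpleGraph (Fin 7) := SimpleGraph.fromRel fun u v =>
  (u = 0 ∧ v = 1) ∨ (u = 1 ∧ v = 2) ∨ (u = 2 ∧ v = 3) ∨ (u = 3 ∧ v = 4) ∨ (u = 4 ∧ v = 0) ∨
  (u = 5 ∧ v = 6) ∨ (u = 0 ∧ v = 5) ∨ (u = 1 ∧ v = 5) ∨ (u = 3 ∧ v = 6)

/-!
Upper bound. Let `S` be the set of fixed points of a map over the alphabet `Fin q` whose
interaction graph lies in `G₁`, and let `H(A)` be the Shannon entropy of the `A`-coordinates of a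
uniformly random element of `S`. Then `H` is submodular, `H(∅) = 0`, `H({v}) ≤ log q` and
`H(V) = log |S|`. A fixed point is determined at `v` by its values at the neighbours of `v`, so
`H(A ∪ {v}) = H(A)` whenever `A` contains all neighbours of `v`. Twenty-two submodularity
instances and ten such closure steps add up to `3 H(V) ≤ 11 log q`, that is `|S| ≤ q ^ (11/3)`.

Lower bound. Over the alphabet `𝔽₂³ ≃ Fin 8`, an explicit `𝔽₂`-linear map in which each vertex
reads only its neighbours has `2 ^ 11 = 8 ^ (11/3)` fixed points.
-/

open Finset Real

theorem Finset.sum_log_nonpos_of_sum_le_card {ι : Type*} {s : Finset ι} {r : ι → ℝ}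
    (hr : ∀ i ∈ s, 0 < r i) (hsum : ∑ i ∈ s, r i ≤ #s) : ∑ i ∈ s, log (r i) ≤ 0 :=
  calc ∑ i ∈ s, log (r i) ≤ ∑ i ∈ s, (r i - 1) :=
        sum_le_sum fun i hi => log_le_sub_one_of_pos (hr i hi)
    _ = ∑ i ∈ s, r i - #s := by simp [sum_sub_distrib]
    _ ≤ 0 := by linarith

section UniformEntropy

variable {Ω β γ δ : Type*} [DecidableEq β] [DecidableEq γ] [DecidableEq δ]

def levelSet (S : Finset Ω) (X : Ω → β) (x : Ω) : Finset Ω := {z ∈ S | X z = X x}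

/-- The Shannon entropy of `X ω` for `ω` uniformly distributed on `S`. -/
def uniformEntropy (S : Finset Ω) (X : Ω → β) : ℝ :=
  log #S - (∑ x ∈ S, log #(levelSet S X x)) / #S

variable {S : Finset Ω} {X : Ω → β} {x z : Ω}

@[simp]
theorem mem_levelSet : z ∈ levelSet S X x ↔ z ∈ S ∧ X z = X x := mem_filter

theorem self_mem_levelSet (hx : x ∈ S) : x ∈ levelSet S X x := mem_levelSet.2 ⟨hx, rfl⟩

theorem card_levelSet_pos (hx : x ∈ S) : 0 < (#(levelSet S X x) : ℝ) := by
  exact_mod_cast card_pos.2 ⟨x, self_mem_levelSet hx⟩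

theorem levelSet_eq_of_mem (hz : z ∈ levelSet S X x) : levelSet S X z = levelSet S X x := by
  ext y
  simp [(mem_levelSet.1 hz).2]

theorem uniformEntropy_eq_of_levelSet_eq {F : Ω → Finset Ω} (h : ∀ x ∈ S, levelSet S X x = F x) :
    uniformEntropy S X = log #S - (∑ x ∈ S, log #(F x)) / #S := by
  rw [uniformEntropy, sum_congr rfl fun x hx => congrArg (fun s : Finset Ω => log #s) (h x hx)]

theorem uniformEntropy_congr {Y : Ω → γ} (h : ∀ x ∈ S, ∀ z ∈ S, X z = X x ↔ Y z = Y x) :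
    uniformEntropy S X = uniformEntropy S Y :=
  uniformEntropy_eq_of_levelSet_eq fun x hx => filter_congr fun z hz => h x hx z hz

theorem uniformEntropy_of_forall_eq (h : ∀ x ∈ S, ∀ z ∈ S, X z = X x) :
    uniformEntropy S X = 0 := by
  rw [uniformEntropy_eq_of_levelSet_eq fun x hx => filter_true_of_mem fun z hz => h x hx z hz,
    sum_const, nsmul_eq_mul]
  rcases S.eq_empty_or_nonempty with rfl | hS
  · simp
  · rw [mul_div_cancel_left₀ _ (by exact_mod_cast hS.card_pos.ne'), sub_self]

theorem uniformEntropy_of_injOn (h : Set.InjOn X S) : uniformEntropy S X = log #S := by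
  rw [uniformEntropy_eq_of_levelSet_eq (F := fun x => {x}) fun x hx => ?_]
  · simp
  ext z
  simp only [mem_levelSet, mem_singleton]
  exact ⟨fun ⟨hz, e⟩ => h hz hx e, by rintro rfl; exact ⟨hx, rfl⟩⟩

theorem sum_inv_card_levelSet (S : Finset Ω) (X : Ω → β) :
    ∑ x ∈ S, (#(levelSet S X x) : ℝ)⁻¹ = #(S.image X) := by
  rw [← sum_fiberwise_of_maps_to (g := X) (t := S.image X) fun x hx => mem_image_of_mem X hx,
    card_eq_sum_ones, Nat.cast_sum]
  refine sum_congr rfl fun b hb => ?_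
  obtain ⟨x, hx, rfl⟩ := mem_image.1 hb
  rw [sum_congr rfl fun z hz => by rw [levelSet_eq_of_mem hz], sum_const, nsmul_eq_mul,
    Nat.cast_one]
  exact mul_inv_cancel₀ (card_levelSet_pos hx).ne'

theorem uniformEntropy_le_log_card_image : uniformEntropy S X ≤ log #(S.image X) := by
  rcases S.eq_empty_or_nonempty with rfl | hS
  · simp [uniformEntropy]
  have hS' : (0 : ℝ) < #S := by exact_mod_cast hS.card_pos
  have hK : (0 : ℝ) < #(S.image X) := by exact_mod_cast (hS.image X).card_pos
  have hgibbs := sum_log_nonpos_of_sum_le_card (s := S)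
    (r := fun x => (#S : ℝ) / (#(levelSet S X x) * #(S.image X)))
    (fun x hx => by have := card_levelSet_pos (X := X) hx; positivity) <| le_of_eq <|
      calc ∑ x ∈ S, (#S : ℝ) / (#(levelSet S X x) * #(S.image X))
          = #S / #(S.image X) * ∑ x ∈ S, (#(levelSet S X x) : ℝ)⁻¹ := by
            rw [mul_sum]
            exact sum_congr rfl fun x _ => by field_simp
        _ = #S := by rw [sum_inv_card_levelSet, div_mul_cancel₀ _ hK.ne']
  have hlog : ∀ x ∈ S, log (#S / (#(levelSet S X x) * #(S.image X))) =
      log #S - log #(levelSet S X x) - log #(S.image X) := fun x hx => by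
    have := card_levelSet_pos (X := X) hx
    rw [log_div hS'.ne' (by positivity), log_mul this.ne' hK.ne']
    ring
  rw [sum_congr rfl hlog, sum_sub_distrib, sum_sub_distrib, sum_const, sum_const, nsmul_eq_mul,
    nsmul_eq_mul] at hgibbs
  rw [uniformEntropy, sub_le_iff_le_add, ← sub_le_iff_le_add', le_div_iff₀ hS']
  linarith

theorem uniformEntropy_le_log_card [Fintype β] : uniformEntropy S X ≤ log (Fintype.card β) := by
  refine uniformEntropy_le_log_card_image.trans ?_
  rcases (S.image X).eq_empty_or_nonempty with h | h
  · simpa [h] using log_natCast_nonneg _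
  · exact log_le_log (by exact_mod_cast h.card_pos) (by exact_mod_cast card_le_univ _)

section Submodularity

variable {Y : Ω → γ} {Z : Ω → δ}

theorem sum_jointFiber_le (hXZ : ∀ x ∈ S, ∀ z ∈ S, X z = X x → Z z = Z x)
    (hYZ : ∀ x ∈ S, ∀ z ∈ S, Y z = Y x → Z z = Z x) {z w : Ω} (hz : z ∈ S) (hw : w ∈ S) :
    ∑ x ∈ S with X x = X z ∧ Y x = Y w,
        ((#(levelSet S (fun ω => (X ω, Y ω)) x) : ℝ) * #(levelSet S Z x))⁻¹ ≤
      if Z w = Z z then (#(levelSet S Z z) : ℝ)⁻¹ else 0 := by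
  set T := {x ∈ S | X x = X z ∧ Y x = Y w}
  rcases T.eq_empty_or_nonempty with hT | ⟨x₀, hx₀⟩
  · rw [hT, sum_empty]
    split_ifs <;> positivity
  have hT : ∀ x ∈ T,
      levelSet S (fun ω => (X ω, Y ω)) x = T ∧ levelSet S Z x = levelSet S Z z := by
    intro x hx
    obtain ⟨hxS, hxz, hxw⟩ := mem_filter.1 hx
    refine ⟨?_, levelSet_eq_of_mem (mem_levelSet.2 ⟨hxS, hXZ z hz x hxS hxz⟩)⟩
    ext y
    simp only [mem_levelSet, T, mem_filter, Prod.ext_iff, hxz, hxw]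
  obtain ⟨hx₀S, hx₀z, hx₀w⟩ := mem_filter.1 hx₀
  have hZ : Z w = Z z := (hYZ x₀ hx₀S w hw hx₀w.symm).trans (hXZ z hz x₀ hx₀S hx₀z)
  have hT₀ : (#T : ℝ) ≠ 0 := Nat.cast_ne_zero.2 (card_pos.2 ⟨x₀, hx₀⟩).ne'
  rw [if_pos hZ, sum_congr rfl fun x hx => by rw [(hT x hx).1, (hT x hx).2], sum_const,
    nsmul_eq_mul, mul_inv, ← mul_assoc, mul_inv_cancel₀ hT₀, one_mul]

theorem sum_card_levelSet_mul_div_le (hXZ : ∀ x ∈ S, ∀ z ∈ S, X z = X x → Z z = Z x)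
    (hYZ : ∀ x ∈ S, ∀ z ∈ S, Y z = Y x → Z z = Z x) :
    ∑ x ∈ S, (#(levelSet S X x) * #(levelSet S Y x) : ℝ) /
      (#(levelSet S (fun ω => (X ω, Y ω)) x) * #(levelSet S Z x)) ≤ #S := by
  calc _ = ∑ x ∈ S, ∑ _p ∈ levelSet S X x ×ˢ levelSet S Y x,
        ((#(levelSet S (fun ω => (X ω, Y ω)) x) : ℝ) * #(levelSet S Z x))⁻¹ := by
        refine sum_congr rfl fun x _ => ?_
        rw [sum_const, card_product, nsmul_eq_mul, div_eq_mul_inv]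
        push_cast
        ring
    _ = ∑ p ∈ S ×ˢ S, ∑ x ∈ S with X x = X p.1 ∧ Y x = Y p.2,
        ((#(levelSet S (fun ω => (X ω, Y ω)) x) : ℝ) * #(levelSet S Z x))⁻¹ :=
        sum_comm' fun x p => by
          simp only [mem_product, mem_levelSet, mem_filter]
          tauto
    _ ≤ ∑ p ∈ S ×ˢ S, if Z p.2 = Z p.1 then (#(levelSet S Z p.1) : ℝ)⁻¹ else 0 :=
        sum_le_sum fun p hp =>
          sum_jointFiber_le hXZ hYZ (mem_product.1 hp).1 (mem_product.1 hp).2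
    _ = ∑ z ∈ S, ∑ _w ∈ levelSet S Z z, (#(levelSet S Z z) : ℝ)⁻¹ := by
        rw [sum_product]
        exact sum_congr rfl fun z _ => by rw [levelSet, sum_filter]; rfl
    _ = #S := by
        rw [card_eq_sum_ones, Nat.cast_sum]
        refine sum_congr rfl fun z hz => ?_
        rw [sum_const, nsmul_eq_mul, mul_inv_cancel₀ (card_levelSet_pos hz).ne', Nat.cast_one]

theorem uniformEntropy_pair_add_le (hXZ : ∀ x ∈ S, ∀ z ∈ S, X z = X x → Z z = Z x)
    (hYZ : ∀ x ∈ S, ∀ z ∈ S, Y z = Y x → Z z = Z x) :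
    uniformEntropy S (fun ω => (X ω, Y ω)) + uniformEntropy S Z ≤
      uniformEntropy S X + uniformEntropy S Y := by
  have hnum : ∀ x ∈ S, (0 : ℝ) < #(levelSet S X x) * #(levelSet S Y x) := fun x hx =>
    mul_pos (card_levelSet_pos hx) (card_levelSet_pos hx)
  have hden : ∀ x ∈ S,
      (0 : ℝ) < #(levelSet S (fun ω => (X ω, Y ω)) x) * #(levelSet S Z x) := fun x hx =>
    mul_pos (card_levelSet_pos hx) (card_levelSet_pos hx)
  have hgibbs := sum_log_nonpos_of_sum_le_card (fun x hx => div_pos (hnum x hx) (hden x hx))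
    (sum_card_levelSet_mul_div_le hXZ hYZ)
  have hlog : ∀ x ∈ S, log ((#(levelSet S X x) * #(levelSet S Y x) : ℝ) /
      (#(levelSet S (fun ω => (X ω, Y ω)) x) * #(levelSet S Z x))) =
      log #(levelSet S X x) + log #(levelSet S Y x) -
        log #(levelSet S (fun ω => (X ω, Y ω)) x) - log #(levelSet S Z x) := by
    intro x hx
    rw [log_div (hnum x hx).ne' (hden x hx).ne',
      log_mul (card_levelSet_pos hx).ne' (card_levelSet_pos hx).ne',
      log_mul (card_levelSet_pos hx).ne' (card_levelSet_pos hx).ne']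
    ring
  rw [sum_congr rfl hlog, sum_sub_distrib, sum_sub_distrib, sum_add_distrib] at hgibbs
  have := div_nonpos_of_nonpos_of_nonneg hgibbs (Nat.cast_nonneg (α := ℝ) #S)
  rw [sub_div, sub_div, add_div] at this
  simp only [uniformEntropy]
  linarith

end Submodularity

end UniformEntropy

theorem Finset.restrict_eq_restrict_iff {V α : Type*} {A : Finset V} {x z : V → α} :
    A.restrict z = A.restrict x ↔ ∀ u ∈ A, z u = x u := by
  simp [funext_iff]

section CoordinateEntropy

variable {V α : Type*} [DecidableEq α] (S : Finset (V → α))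

def coordEntropy (A : Finset V) : ℝ := uniformEntropy S A.restrict

theorem coordEntropy_empty : coordEntropy S ∅ = 0 :=
  uniformEntropy_of_forall_eq fun _ _ _ _ => by simp [restrict_eq_restrict_iff]

theorem coordEntropy_univ [Fintype V] : coordEntropy S univ = log #S :=
  uniformEntropy_of_injOn fun z _ x _ h => by
    simpa [restrict_eq_restrict_iff, ← funext_iff] using h

theorem coordEntropy_le [Fintype α] (A : Finset V) :
    coordEntropy S A ≤ #A * log (Fintype.card α) := by
  classical
  simpa [coordEntropy, Fintype.card_fun, log_pow] using
    uniformEntropy_le_log_card (S := S) (X := A.restrict)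

variable [DecidableEq V]

theorem coordEntropy_union_add_inter_le (A B : Finset V) :
    coordEntropy S (A ∪ B) + coordEntropy S (A ∩ B) ≤ coordEntropy S A + coordEntropy S B := by
  have hU : coordEntropy S (A ∪ B) = uniformEntropy S (fun x => (A.restrict x, B.restrict x)) :=
    uniformEntropy_congr fun x _ z _ => by
      simp only [restrict_eq_restrict_iff, Prod.ext_iff, forall_mem_union]
  rw [hU]
  refine uniformEntropy_pair_add_le (fun x _ z _ h => ?_) (fun x _ z _ h => ?_) <;>
    rw [restrict_eq_restrict_iff] at h ⊢
  exacts [fun u hu => h u (mem_inter.1 hu).1, fun u hu => h u (mem_inter.1 hu).2]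

theorem coordEntropy_insert {A : Finset V} {v : V}
    (h : ∀ x ∈ S, ∀ z ∈ S, (∀ u ∈ A, z u = x u) → z v = x v) :
    coordEntropy S (insert v A) = coordEntropy S A :=
  uniformEntropy_congr fun x hx z hz => by
    simp only [restrict_eq_restrict_iff, forall_mem_insert]
    exact ⟨And.right, fun hA => ⟨h x hx z hz hA, hA⟩⟩

end CoordinateEntropy

section GuessingNumber

variable {V : Type*}

def IsLocal (G : SimpleGraph V) {α : Type*} (f : (V → α) → V → α) : Prop :=
  ∀ v x y, (∀ u, G.Adj u v → x u = y u) → f x v = f y v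

variable {G : SimpleGraph V}

theorem IsLocal.apply_eq_of_fixed {α : Type*} {f : (V → α) → V → α} (hf : IsLocal G f)
    {x z : V → α} (hx : f x = x) (hz : f z = z) {v : V} (h : ∀ u, G.Adj u v → z u = x u) :
    z v = x v :=
  calc z v = f z v := (congrFun hz v).symm
    _ = f x v := hf v z x h
    _ = x v := congrFun hx v

variable {q : ℕ}

theorem igLe_of_isLocal {f : (V → Fin q) → V → Fin q} (hf : IsLocal G f) : IGLe G f := by
  rintro u v ⟨a, b, hab, hne⟩
  by_contra hadj
  exact hne (hf v a b fun w hw => hab w fun h => hadj (h ▸ hw))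

theorem IGLe.isLocal [Finite V] {f : (V → Fin q) → V → Fin q} (hf : IGLe G f) :
    IsLocal G f := by
  classical
  have := Fintype.ofFinite V
  intro v x y hxy
  -- Move `x` towards `y` one coordinate at a time.
  suffices ∀ D : Finset V, ∀ x : V → Fin q, (∀ u ∉ D, x u = y u) →
      (∀ u, G.Adj u v → x u = y u) → f x v = f y v from this univ x (by simp) hxy
  intro D
  induction D using Finset.induction_on with
  | empty => exact fun x hx _ => by rw [funext fun u => hx u (notMem_empty u)]
  | insert a D _ ih =>
    intro x hx hxy
    have hstep : f x v = f (Function.update x a (y a)) v := by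
      by_contra hne
      have hadj := hf a v ⟨x, _, fun w hw => (Function.update_of_ne hw _ _).symm, hne⟩
      exact hne (by rw [Function.update_eq_self_iff.2 (hxy a hadj).symm])
    rw [hstep]
    refine ih _ (fun u hu => ?_) (fun u hu => ?_) <;> by_cases hua : u = a
    · simp [hua]
    · rw [Function.update_of_ne hua]
      exact hx u (by simp [hua, hu])
    · simp [hua]
    · rw [Function.update_of_ne hua]
      exact hxy u hu

theorem exists_igLe_card_le_ncard_fixedPoints [Finite V] {α ι : Type*} (e : α ≃ Fin q)
    {f : (V → α) → V → α} (hf : IsLocal G f) {φ : ι → V → α} (hφ : φ.Injective)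
    (hfix : ∀ i, f (φ i) = φ i) :
    ∃ g : (V → Fin q) → V → Fin q, IGLe G g ∧ Nat.card ι ≤ Set.ncard {p | g p = p} := by
  refine ⟨fun p v => e (f (fun u => e.symm (p u)) v), igLe_of_isLocal fun v x y h => ?_, ?_⟩
  · rw [hf v _ _ fun u hu => by rw [h u hu]]
  · rw [← Set.ncard_univ]
    refine Set.ncard_le_ncard_of_injOn (fun i v => e (φ i v)) (fun i _ => ?_)
      (fun i _ j _ hij => hφ ?_) (Set.toFinite _)
    · simp [hfix]
    · funext v
      exact e.injective (congrFun hij v)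

theorem guessing_le {c : ℝ} (hq : 0 < q)
    (h : ∀ f : (V → Fin q) → V → Fin q, IGLe G f → logb q (Set.ncard {p | f p = p}) ≤ c) :
    guessing G q ≤ c :=
  csSup_le ⟨_, fun _ _ => ⟨0, hq⟩, igLe_of_isLocal fun _ _ _ _ => rfl, rfl⟩
    (by rintro _ ⟨f, hf, rfl⟩; exact h f hf)

theorem le_guessing {c : ℝ}
    (h : ∀ f : (V → Fin q) → V → Fin q, IGLe G f → logb q (Set.ncard {p | f p = p}) ≤ c)
    {f : (V → Fin q) → V → Fin q} (hf : IGLe G f) :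
    logb q (Set.ncard {p | f p = p}) ≤ guessing G q :=
  le_csSup ⟨c, by rintro _ ⟨f, hf, rfl⟩; exact h f hf⟩ ⟨f, hf, rfl⟩

theorem graphEntropy_eq {c : ℝ} (hle : ∀ q, 2 ≤ q → guessing G q ≤ c) {q₀ : ℕ} (hq₀ : 2 ≤ q₀)
    (h : c ≤ guessing G q₀) : graphEntropy G = c :=
  le_antisymm (csSup_le ⟨_, q₀, hq₀, rfl⟩ (by rintro _ ⟨q, hq, rfl⟩; exact hle q hq))
    (h.trans (le_csSup ⟨c, by rintro _ ⟨q, hq, rfl⟩; exact hle q hq⟩ ⟨q₀, hq₀, rfl⟩))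

end GuessingNumber

instance : DecidableRel G1.Adj := by
  unfold G1
  infer_instance

theorem polymatroid_bound_G1 (H : Finset (Fin 7) → ℝ) (c : ℝ) (h_empty : H ∅ = 0)
    (h_submod : ∀ A B, H (A ∪ B) + H (A ∩ B) ≤ H A + H B) (h_le : ∀ v, H {v} ≤ c)
    (h_closed : ∀ v A, (∀ u, G1.Adj u v → u ∈ A) → H (insert v A) = H A) :
    3 * H univ ≤ 11 * c := by
  have sub : ∀ A B C D, A ∪ B = C → A ∩ B = D → H C + H D ≤ H A + H B := by
    rintro A B _ _ rfl rfl
    exact h_submod A B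
  have cl : ∀ v A C, insert v A = C → (∀ u, G1.Adj u v → u ∈ A) → H C = H A := by
    rintro v A _ rfl hA
    exact h_closed v A hA
  linarith [sub {0} {1} {0,1} ∅ (by decide) (by decide),
    sub {0} {3} {0,3} ∅ (by decide) (by decide),
    sub {1} {5} {1,5} ∅ (by decide) (by decide),
    sub {1} {6} {1,6} ∅ (by decide) (by decide),
    sub {2} {5} {2,5} ∅ (by decide) (by decide),
    sub {3} {5} {3,5} ∅ (by decide) (by decide),
    sub {4} {5} {4,5} ∅ (by decide) (by decide),
    sub {4} {6} {4,6} ∅ (by decide) (by decide),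
    sub {0,1} {1,6} {0,1,6} {1} (by decide) (by decide),
    sub {1,5} {4,5} {1,4,5} {5} (by decide) (by decide),
    sub {2,5} {5,6} {2,5,6} {5} (by decide) (by decide),
    sub {2,6} {4,6} {2,4,6} {6} (by decide) (by decide),
    sub {3,4} {4,5} {3,4,5} {4} (by decide) (by decide),
    sub {0,2,6} {2,5,6} {0,2,5,6} {2,6} (by decide) (by decide),
    sub {1,5,6} {3,5,6} {1,3,5,6} {5,6} (by decide) (by decide),
    sub {0,3,4} {2,3,4} {0,2,3,4} {3,4} (by decide) (by decide),
    sub {0,4,5} {3,4,5,6} {0,3,4,5,6} {4,5} (by decide) (by decide),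
    sub {0,1,5,6} {1,2,5,6} {0,1,2,5,6} {1,5,6} (by decide) (by decide),
    sub {0,2,3,4} {2,3,4,6} {0,2,3,4,6} {2,3,4} (by decide) (by decide),
    sub {0,1,4,5} {0,3,4,5,6} {0,1,3,4,5,6} {0,4,5} (by decide) (by decide),
    sub {0,1,2,5,6} {1,2,3,5,6} {0,1,2,3,5,6} {1,2,5,6} (by decide) (by decide),
    sub {0,1,2,5,6} {0,2,3,4,6} univ {0,2,6} (by decide) (by decide),
    cl 4 {0,3} {0,3,4} (by decide) (by decide),
    cl 6 {3,5} {3,5,6} (by decide) (by decide),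
    cl 5 {0,1,6} {0,1,5,6} (by decide) (by decide),
    cl 0 {1,4,5} {0,1,4,5} (by decide) (by decide),
    cl 3 {2,4,6} {2,3,4,6} (by decide) (by decide),
    cl 6 {3,4,5} {3,4,5,6} (by decide) (by decide),
    cl 1 {0,2,5,6} {0,1,2,5,6} (by decide) (by decide),
    cl 2 {1,3,5,6} {1,2,3,5,6} (by decide) (by decide),
    cl 2 {0,1,3,4,5,6} univ (by decide) (by decide),
    cl 4 {0,1,2,3,5,6} univ (by decide) (by decide),
    h_le 0, h_le 1, h_le 2, h_le 3, h_le 4, h_le 5, h_le 6]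

theorem logb_ncard_fixedPoints_le_G1 {q : ℕ} (hq : 2 ≤ q) {f : (Fin 7 → Fin q) → Fin 7 → Fin q}
    (hf : IGLe G1 f) : logb q (Set.ncard {p | f p = p}) ≤ 11 / 3 := by
  classical
  set S : Finset (Fin 7 → Fin q) := {p | f p = p}
  have hS : Set.ncard {p | f p = p} = #S := by
    rw [← Set.ncard_coe_finset]
    simp [S]
  have key := polymatroid_bound_G1 (coordEntropy S) (log q) (coordEntropy_empty S)
    (coordEntropy_union_add_inter_le S) (fun v => by simpa using coordEntropy_le S {v})
    (fun v A hA => coordEntropy_insert S fun x hx z hz hzx =>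
      hf.isLocal.apply_eq_of_fixed (mem_filter.1 hx).2 (mem_filter.1 hz).2
        fun u hu => hzx u (hA u hu))
  rw [coordEntropy_univ] at key
  rw [hS, logb, div_le_iff₀ (log_pos (by exact_mod_cast hq))]
  linarith

/-- The fixed points of this map are exactly the vectors `codeParam y`. -/
def linearCodeG1 (x : Fin 7 → Fin 3 → ZMod 2) : Fin 7 → Fin 3 → ZMod 2
  | 0 => ![x 1 0 + x 4 0 + x 4 2 + x 5 1, x 4 2, x 1 0 + x 4 2 + x 5 1]
  | 1 => ![x 0 1 + x 0 2 + x 5 1, x 2 0, x 2 0 + x 2 1 + x 2 2]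
  | 2 => ![x 1 1, x 1 1 + x 3 1, x 1 2 + x 3 1]
  | 3 => ![x 2 0 + x 2 1 + x 6 0, x 2 0 + x 2 1, x 2 0 + x 2 1 + x 4 0 + x 4 1 + x 4 2 + x 6 0]
  | 4 => ![x 0 0 + x 0 2, x 0 0 + x 0 1 + x 0 2 + x 3 0 + x 3 2, x 0 1]
  | 5 => ![x 0 1 + x 0 2 + x 1 0 + x 6 0 + x 6 1 + x 6 2, x 0 1 + x 0 2 + x 1 0,
      x 0 1 + x 0 2 + x 1 0 + x 6 0 + x 6 2]
  | 6 => ![x 3 0 + x 3 1, x 5 0 + x 5 2, x 3 0 + x 3 1 + x 5 1 + x 5 2]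

def codeParam (y : Fin 11 → ZMod 2) : Fin 7 → Fin 3 → ZMod 2 :=
  ![![y 0, y 1, y 2], ![y 3, y 4, y 5], ![y 4, y 6, y 4 + y 5 + y 6], ![y 7, y 4 + y 6, y 8],
    ![y 0 + y 2, y 0 + y 1 + y 2 + y 7 + y 8, y 1], ![y 9, y 1 + y 2 + y 3, y 10],
    ![y 4 + y 6 + y 7, y 9 + y 10, y 1 + y 2 + y 3 + y 4 + y 6 + y 7 + y 10]]

theorem isLocal_linearCodeG1 : IsLocal G1 linearCodeG1 := by
  intro v x y h
  fin_cases v <;> simp +decide [linearCodeG1, h 0, h 1, h 2, h 3, h 4, h 5, h 6]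

theorem linearCodeG1_codeParam (y : Fin 11 → ZMod 2) :
    linearCodeG1 (codeParam y) = codeParam y := by
  funext v i
  fin_cases v <;> fin_cases i <;> simp [linearCodeG1, codeParam] <;> grind

theorem codeParam_injective : codeParam.Injective := by
  intro y y' h
  have hv := fun v i => congrFun (congrFun h v) i
  funext j
  fin_cases j
  exacts [hv 0 0, hv 0 1, hv 0 2, hv 1 0, hv 1 1, hv 1 2, hv 2 1, hv 3 0, hv 3 2, hv 5 0, hv 5 2]

theorem exists_igLe_G1_two_pow_le : ∃ g : (Fin 7 → Fin 8) → Fin 7 → Fin 8,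
    IGLe G1 g ∧ 2 ^ 11 ≤ Set.ncard {p | g p = p} := by
  obtain ⟨g, hg, hcard⟩ := exists_igLe_card_le_ncard_fixedPoints
    (Fintype.equivFinOfCardEq (by simp) : (Fin 3 → ZMod 2) ≃ Fin 8) isLocal_linearCodeG1
    codeParam_injective linearCodeG1_codeParam
  exact ⟨g, hg, by simpa using hcard⟩

/-- The entropy of `G₁` equals `11/3`. -/
theorem entropy_G1 : graphEntropy G1 = 11/3 := by
  have hle : ∀ q : ℕ, 2 ≤ q → ∀ f : (Fin 7 → Fin q) → Fin 7 → Fin q, IGLe G1 f →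
      logb q (Set.ncard {p | f p = p}) ≤ 11 / 3 :=
    fun q hq f hf => logb_ncard_fixedPoints_le_G1 hq hf
  obtain ⟨g, hg, hcard⟩ := exists_igLe_G1_two_pow_le
  refine graphEntropy_eq (fun q hq => guessing_le (by omega) (hle q hq)) (by norm_num : 2 ≤ 8) ?_
  calc (11 / 3 : ℝ) = logb (8 : ℕ) (2 ^ 11 : ℕ) := by
        rw [show ((8 : ℕ) : ℝ) = 2 ^ 3 by norm_num, Nat.cast_pow, logb, log_pow, log_pow]
        field_simp
        norm_num
    _ ≤ logb (8 : ℕ) (Set.ncard {p | g p = p}) :=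
        logb_le_logb_of_le (by norm_num) (by positivity) (by exact_mod_cast hcard)
    _ ≤ guessing G1 8 := le_guessing (hle 8 (by norm_num)) hg

end
end
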